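/- arXiv:1609.05142 — 5 statements merged into one kernel-verified Lean document; each statement's English description precedes it below -/
import Mathlib

section
/- Let L₁, L₂, L̄₁, L̄₂ be finite multisets of positive real numbers with |L₁| = |L₂| and L₁ ⊎ L₁ ⊎ 2L̄₁ = L₂ ⊎ L₂ ⊎ 2L̄₂, where 2L̄ denotes the multiset obtained by doubling each element of L̄. Then the multisets σ(L₁;L̄₁) and σ(L₂;L̄₂) are equal, where σ(L;L̄) := (⊎_{ℓ∈L} A(ℓ)) ⊎ (⊎_{ℓ̄∈L̄} Ā(2ℓ̄)), with A(ℓ) = {0} ∪ (2π/ℓ)ℕ⁺ ∪ (2π/ℓ)ℕ⁺ and Ā(ℓ) = {0} ∪ (2π/ℓ)ℕ⁺ as multisets of real numbers. -/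
open Classical in
/-- Multiplicity function of the multiset `A(ℓ) = {0} ∪ (2π/ℓ)ℕ⁺ ∪ (2π/ℓ)ℕ⁺`. -/
noncomputable def Amult (ℓ : ℝ) : ℝ → ℕ := fun r =>
  (if r = 0 then 1 else 0)
    + (if ∃ m : ℕ, 0 < m ∧ r = 2 * Real.pi * (m : ℝ) / ℓ then 2 else 0)

open Classical in
/-- Multiplicity function of the multiset `Ā(ℓ) = {0} ∪ (2π/ℓ)ℕ⁺`. -/
noncomputable def Abarmult (ℓ : ℝ) : ℝ → ℕ := fun r =>
  (if r = 0 then 1 else 0)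
    + (if ∃ m : ℕ, 0 < m ∧ r = 2 * Real.pi * (m : ℝ) / ℓ then 1 else 0)

/-- Multiplicity function of `σ(L;L̄) = (⊎_{ℓ∈L} A(ℓ)) ⊎ (⊎_{ℓ̄∈L̄} Ā(2ℓ̄))`. -/
noncomputable def sigmaMult (L Lb : Multiset ℝ) : ℝ → ℕ := fun r =>
  (L.map (fun ℓ => Amult ℓ r)).sum + (Lb.map (fun ℓ => Abarmult (2 * ℓ) r)).sum

open Classical in
lemma sigma_eq (L Lb : Multiset ℝ) (r : ℝ) :
    sigmaMult L Lb r
      = (Multiset.card L + Multiset.card Lb) * (if r = 0 then 1 else 0)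
        + ((L + L + Lb.map (fun ℓ => 2 * ℓ)).map
            (fun ℓ => if ∃ m : ℕ, 0 < m ∧ r = 2 * Real.pi * (m : ℝ) / ℓ then 1 else 0)).sum := by
  classical
  set z : ℕ := if r = 0 then 1 else 0 with hz
  set f : ℝ → ℕ := fun ℓ => if ∃ m : ℕ, 0 < m ∧ r = 2 * Real.pi * (m : ℝ) / ℓ then 1 else 0
    with hf
  have hA : ∀ ℓ : ℝ, Amult ℓ r = z + 2 * f ℓ := by
    intro ℓ; simp only [Amult, hz, hf]
    by_cases h : ∃ m : ℕ, 0 < m ∧ r = 2 * Real.pi * (m : ℝ) / ℓ <;> simp [h]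
  have hAb : ∀ ℓ : ℝ, Abarmult ℓ r = z + f ℓ := by
    intro ℓ; simp only [Abarmult, hz, hf]
  simp only [sigmaMult, hA, hAb]
  rw [Multiset.map_add, Multiset.map_add, Multiset.sum_add, Multiset.sum_add,
    Multiset.map_map]
  simp only [Multiset.sum_map_add]
  simp [Multiset.map_const', Multiset.sum_replicate, Multiset.sum_map_mul_left,
    Function.comp]
  ring

/-- Equivalent boundary data yield identical canonical Steklov spectra:
if `|L₁| = |L₂|` and `L₁ ⊎ L₁ ⊎ 2L̄₁ = L₂ ⊎ L₂ ⊎ 2L̄₂`, then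
`σ(L₁;L̄₁) = σ(L₂;L̄₂)` as multisets of real numbers. -/
theorem equivalent_data_isospectral (L₁ L₂ Lb₁ Lb₂ : Multiset ℝ)
    (hL₁ : ∀ ℓ ∈ L₁, 0 < ℓ) (hL₂ : ∀ ℓ ∈ L₂, 0 < ℓ)
    (hLb₁ : ∀ ℓ ∈ Lb₁, 0 < ℓ) (hLb₂ : ∀ ℓ ∈ Lb₂, 0 < ℓ)
    (hcard : Multiset.card L₁ = Multiset.card L₂)
    (hmult : L₁ + L₁ + Lb₁.map (fun ℓ => 2 * ℓ)
      = L₂ + L₂ + Lb₂.map (fun ℓ => 2 * ℓ)) :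
    sigmaMult L₁ Lb₁ = sigmaMult L₂ Lb₂ := by
  have hc := congrArg Multiset.card hmult
  simp [Multiset.card_add] at hc
  have hcb : Multiset.card Lb₁ = Multiset.card Lb₂ := by omega
  funext r
  rw [sigma_eq, sigma_eq, hmult, hcard, hcb]
end

section
/- Let m ≥ 1 and j ≥ 1 be integers, let q = jᵐ and p = (1, j, j², …, j^{m-1}) ∈ ℤᵐ. Consider the lattice 𝓛 = {a ∈ ℤᵐ : a₁ + a₂j + ⋯ + aₘj^{m-1} ≡ 0 (mod jᵐ)}. Then the minimum of the L¹ norm |a₁| + ⋯ + |aₘ| over all nonzero a ∈ 𝓛 equals j. -/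
/-- For `q = jᵐ` and `p = (1, j, j², …, j^{m-1})`, the minimum of the `L¹` norm
over nonzero vectors of the lattice `𝓛 = {a ∈ ℤᵐ : a ⋅ p ≡ 0 (mod jᵐ)}` is `j`. -/
theorem lattice_min_L1_norm (m j : ℕ) (hm : 1 ≤ m) (hj : 1 ≤ j) :
    IsLeast {s : ℤ | ∃ a : Fin m → ℤ, a ≠ 0 ∧
        ((j : ℤ) ^ m ∣ ∑ i : Fin m, a i * (j : ℤ) ^ (i : ℕ)) ∧
        s = ∑ i : Fin m, |a i|}
      (j : ℤ) := by
  classical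
  have hj0 : (j : ℤ) ≠ 0 := by positivity
  constructor
  · refine ⟨fun i => if i = ⟨m - 1, by omega⟩ then (j : ℤ) else 0, ?_, ?_, ?_⟩
    · intro h
      have := congrFun h ⟨m - 1, by omega⟩
      simp at this
      exact hj0 (by exact_mod_cast this)
    · have h1 : (∑ i : Fin m,
          (if i = (⟨m - 1, by omega⟩ : Fin m) then (j : ℤ) else 0) * (j : ℤ) ^ (i : ℕ))
          = (j : ℤ) * (j : ℤ) ^ (m - 1) := by
        rw [Finset.sum_eq_single (⟨m - 1, by omega⟩ : Fin m)]
        · simp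
        · intro b _ hb; simp [hb]
        · simp
      rw [h1, ← pow_succ']
      have h2 : m - 1 + 1 = m := by omega
      rw [h2]
    · rw [Finset.sum_eq_single (⟨m - 1, by omega⟩ : Fin m)]
      · simp
      · intro b _ hb; simp [hb]
      · simp
  · rintro s ⟨a, ha, hdvd, rfl⟩
    set a' : ℕ → ℤ := fun n => if h : n < m then a ⟨n, h⟩ else 0 with ha'
    have hex : ∃ n, a' n ≠ 0 := by
      obtain ⟨i, hi⟩ := Function.ne_iff.mp ha
      exact ⟨i, by simpa [a', i.isLt] using hi⟩
    set k := Nat.find hex with hkdef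
    have hk : a' k ≠ 0 := Nat.find_spec hex
    have hkm : k < m := by
      by_contra h
      exact hk (by simp [a', h])
    have hmin : ∀ n < k, a' n = 0 := fun n hn => not_not.mp (Nat.find_min hex hn)
    have hSum : (∑ i : Fin m, a i * (j : ℤ) ^ (i : ℕ))
        = ∑ n ∈ Finset.range m, a' n * (j : ℤ) ^ n := by
      rw [← Fin.sum_univ_eq_sum_range]
      exact Finset.sum_congr rfl fun i _ => by simp [a', i.isLt]
    rw [hSum] at hdvd
    have hdvd1 : (j : ℤ) ^ (k + 1) ∣ ∑ n ∈ Finset.range m, a' n * (j : ℤ) ^ n :=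
      dvd_trans (pow_dvd_pow _ (by omega)) hdvd
    have hsplit : ∑ n ∈ Finset.range m, a' n * (j : ℤ) ^ n
        = a' k * (j : ℤ) ^ k + ∑ n ∈ Finset.Ico (k + 1) m, a' n * (j : ℤ) ^ n := by
      rw [Finset.range_eq_Ico, ← Finset.sum_Ico_consecutive _ (Nat.zero_le k) (le_of_lt hkm)]
      have h0 : ∑ n ∈ Finset.Ico 0 k, a' n * (j : ℤ) ^ n = 0 :=
        Finset.sum_eq_zero fun n hn => by
          rw [hmin n (Finset.mem_Ico.mp hn).2, zero_mul]
      rw [h0, zero_add, Finset.sum_eq_sum_Ico_succ_bot hkm]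
    have hdvd2 : (j : ℤ) ^ (k + 1) ∣ ∑ n ∈ Finset.Ico (k + 1) m, a' n * (j : ℤ) ^ n :=
      Finset.dvd_sum fun n hn =>
        Dvd.dvd.mul_left (pow_dvd_pow _ (Finset.mem_Ico.mp hn).1) _
    have hdvd3 : (j : ℤ) ^ (k + 1) ∣ a' k * (j : ℤ) ^ k := by
      have := dvd_sub hdvd1 hdvd2
      rwa [hsplit, add_sub_cancel_right] at this
    have hdvdak : (j : ℤ) ∣ a' k := by
      have h1 : (j : ℤ) * (j : ℤ) ^ k ∣ a' k * (j : ℤ) ^ k := by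
        rw [mul_comm, ← pow_succ]; exact hdvd3
      exact (mul_dvd_mul_iff_right (pow_ne_zero k hj0)).mp h1
    have hle : (j : ℤ) ≤ |a' k| :=
      Int.le_of_dvd (abs_pos.mpr hk) ((dvd_abs _ _).mpr hdvdak)
    have heq : a' k = a ⟨k, hkm⟩ := by simp [a', hkm]
    calc (j : ℤ) ≤ |a ⟨k, hkm⟩| := by rwa [heq] at hle
      _ ≤ ∑ i : Fin m, |a i| :=
        Finset.single_le_sum (f := fun i => |a i|) (fun i _ => abs_nonneg _)
          (Finset.mem_univ _)
end

section
/- Let n ≥ 2, α > 0 and 0 < r ≤ 1/√α. Then ∫₀^{4r} sinh^{n-1}(√α t) dt ≤ 2^{4n} e^{4(n-1)√α r} ∫₀^{r/4} sinh^{n-1}(√α t) dt. In particular, since √α r ≤ 1, the left integral is at most 2^{4n} e^{4(n-1)} times the right integral. -/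
lemma cosh_le_exp_of_nonneg {x : ℝ} (hx : 0 ≤ x) : Real.cosh x ≤ Real.exp x := by
  rw [Real.cosh_eq]
  have : Real.exp (-x) ≤ Real.exp x := Real.exp_le_exp.2 (by linarith)
  linarith

lemma sinh_nat_mul_le (k : ℕ) {x : ℝ} (hx : 0 ≤ x) :
    Real.sinh (((k : ℝ) + 1) * x) ≤ ((k : ℝ) + 1) * Real.exp (k * x) * Real.sinh x := by
  induction k with
  | zero => simp
  | succ k ih =>
      have hsx : 0 ≤ Real.sinh x := Real.sinh_nonneg_iff.2 hx
      have hkx : (0:ℝ) ≤ (k : ℝ) * x := by positivity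
      have h1 : Real.sinh (((k : ℝ) + 1 + 1) * x)
          = Real.sinh (((k : ℝ) + 1) * x) * Real.cosh x
            + Real.cosh (((k : ℝ) + 1) * x) * Real.sinh x := by
        rw [← Real.sinh_add]; ring_nf
      have hc1 : Real.cosh x ≤ Real.exp x := cosh_le_exp_of_nonneg hx
      have hc2 : Real.cosh (((k : ℝ) + 1) * x) ≤ Real.exp (((k : ℝ) + 1) * x) :=
        cosh_le_exp_of_nonneg (by positivity)
      have hsinh1 : 0 ≤ Real.sinh (((k : ℝ) + 1) * x) := Real.sinh_nonneg_iff.2 (by positivity)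
      have hcosh1 : 0 < Real.cosh x := Real.cosh_pos (x := x)
      have step1 : Real.sinh (((k : ℝ) + 1) * x) * Real.cosh x
          ≤ ((k : ℝ) + 1) * Real.exp ((k : ℝ) * x) * Real.sinh x * Real.exp x := by
        have := mul_le_mul ih hc1 hcosh1.le (by positivity)
        linarith
      have step2 : Real.cosh (((k : ℝ) + 1) * x) * Real.sinh x
          ≤ Real.exp (((k : ℝ) + 1) * x) * Real.sinh x :=
        mul_le_mul_of_nonneg_right hc2 hsx
      have hexp : Real.exp ((k : ℝ) * x) * Real.exp x = Real.exp (((k : ℝ) + 1) * x) := by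
        rw [← Real.exp_add]; ring_nf
      push_cast
      rw [h1]
      calc Real.sinh (((k : ℝ) + 1) * x) * Real.cosh x
            + Real.cosh (((k : ℝ) + 1) * x) * Real.sinh x
          ≤ ((k : ℝ) + 1) * Real.exp ((k : ℝ) * x) * Real.sinh x * Real.exp x
            + Real.exp (((k : ℝ) + 1) * x) * Real.sinh x := by linarith
        _ = ((k : ℝ) + 1 + 1) * Real.exp (((k : ℝ) + 1) * x) * Real.sinh x := by
            rw [← hexp]; ring

lemma sinh_sixteen_mul_le {x : ℝ} (hx : 0 ≤ x) :
    Real.sinh (16 * x) ≤ 16 * Real.exp (15 * x) * Real.sinh x := by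
  have := sinh_nat_mul_le 15 hx
  norm_num at this ⊢
  exact this

/-- Bishop–Gromov-type bound on hyperbolic volume integrals:
for `n ≥ 2`, `α > 0` and `0 < r ≤ 1/√α`,
`∫₀^{4r} sinh^{n-1}(√α t) dt ≤ 2^{4n} e^{4(n-1)√α r} ∫₀^{r/4} sinh^{n-1}(√α t) dt`,
and in particular the left integral is at most `2^{4n} e^{4(n-1)}` times the right one. -/
theorem sinh_integral_ratio_bound (n : ℕ) (hn : 2 ≤ n) (α r : ℝ) (hα : 0 < α)
    (hr : 0 < r) (hr' : r ≤ 1 / Real.sqrt α) :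
    ((∫ t in (0:ℝ)..(4 * r), Real.sinh (Real.sqrt α * t) ^ (n - 1))
        ≤ 2 ^ (4 * n) * Real.exp (4 * ((n : ℝ) - 1) * Real.sqrt α * r)
          * ∫ t in (0:ℝ)..(r / 4), Real.sinh (Real.sqrt α * t) ^ (n - 1)) ∧
    ((∫ t in (0:ℝ)..(4 * r), Real.sinh (Real.sqrt α * t) ^ (n - 1))
        ≤ 2 ^ (4 * n) * Real.exp (4 * ((n : ℝ) - 1))
          * ∫ t in (0:ℝ)..(r / 4), Real.sinh (Real.sqrt α * t) ^ (n - 1)) := by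
  set s := Real.sqrt α with hs_def
  have hs : 0 < s := Real.sqrt_pos.2 hα
  have hsr : s * r ≤ 1 := by
    rw [le_div_iff₀ hs] at hr'; linarith [hr']
  have hsr0 : 0 ≤ s * r := by positivity
  have hn1 : (1:ℝ) ≤ (n : ℝ) := by exact_mod_cast (by omega : 1 ≤ n)
  have hcast : ((n - 1 : ℕ) : ℝ) = (n : ℝ) - 1 := by
    have : 1 ≤ n := by omega
    push_cast [this]; ring
  -- substitution: LHS = 16 * ∫ u in 0..r/4, sinh(s*(16*u))^(n-1)
  have hsub : (∫ t in (0:ℝ)..(4 * r), Real.sinh (s * t) ^ (n - 1))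
      = 16 * ∫ u in (0:ℝ)..(r / 4), Real.sinh (s * (16 * u)) ^ (n - 1) := by
    have h := intervalIntegral.integral_comp_mul_left
      (fun t => Real.sinh (s * t) ^ (n - 1)) (a := 0) (b := r / 4)
      (c := (16:ℝ)) (by norm_num)
    have h4 : 16 * (r / 4) = 4 * r := by ring
    simp only [smul_eq_mul, mul_zero, h4] at h
    rw [h]; ring
  rw [hsub]
  -- pointwise bound on [0, r/4]
  have hmono : (∫ u in (0:ℝ)..(r / 4), Real.sinh (s * (16 * u)) ^ (n - 1))
      ≤ ∫ u in (0:ℝ)..(r / 4),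
          16 ^ (n - 1) * Real.exp (((n : ℝ) - 1) * (15 * (s * r / 4)))
            * Real.sinh (s * u) ^ (n - 1) := by
    apply intervalIntegral.integral_mono_on (by positivity)
    · exact ((Real.continuous_sinh.comp (continuous_const.mul
        (continuous_const.mul continuous_id))).pow _).intervalIntegrable _ _
    · exact (continuous_const.mul ((Real.continuous_sinh.comp
        (continuous_const.mul continuous_id)).pow _)).intervalIntegrable _ _
    · intro u hu
      obtain ⟨hu0, hu1⟩ := hu
      have hsu : 0 ≤ s * u := by positivity
      have h16 : Real.sinh (s * (16 * u)) ≤ 16 * Real.exp (15 * (s * u)) * Real.sinh (s * u) := by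
        have := sinh_sixteen_mul_le hsu
        convert this using 2 <;> ring
      have hb : 16 * Real.exp (15 * (s * u)) * Real.sinh (s * u)
          ≤ 16 * Real.exp (15 * (s * r / 4)) * Real.sinh (s * u) := by
        apply mul_le_mul_of_nonneg_right _ (Real.sinh_nonneg_iff.2 hsu)
        apply mul_le_mul_of_nonneg_left _ (by norm_num)
        apply Real.exp_le_exp.2
        nlinarith [hs.le]
      have hpow : Real.sinh (s * (16 * u)) ^ (n - 1)
          ≤ (16 * Real.exp (15 * (s * r / 4)) * Real.sinh (s * u)) ^ (n - 1) :=
        pow_le_pow_left₀ (Real.sinh_nonneg_iff.2 (by positivity)) (h16.trans hb) _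
      calc Real.sinh (s * (16 * u)) ^ (n - 1)
          ≤ (16 * Real.exp (15 * (s * r / 4)) * Real.sinh (s * u)) ^ (n - 1) := hpow
        _ = 16 ^ (n - 1) * Real.exp (((n : ℝ) - 1) * (15 * (s * r / 4)))
              * Real.sinh (s * u) ^ (n - 1) := by
            rw [mul_pow, mul_pow, ← Real.exp_nat_mul, hcast]
  rw [intervalIntegral.integral_const_mul] at hmono
  set I := ∫ u in (0:ℝ)..(r / 4), Real.sinh (s * u) ^ (n - 1) with hI_def
  have hI : 0 ≤ I := by
    apply intervalIntegral.integral_nonneg (by positivity)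
    intro u hu
    exact pow_nonneg (Real.sinh_nonneg_iff.2 (mul_nonneg hs.le hu.1)) _
  have key : 16 * ∫ u in (0:ℝ)..(r / 4), Real.sinh (s * (16 * u)) ^ (n - 1)
      ≤ 2 ^ (4 * n) * Real.exp (4 * ((n : ℝ) - 1) * s * r) * I := by
    have h2 : (2:ℝ) ^ (4 * n) = 16 ^ n := by
      rw [pow_mul]; norm_num
    have h16n : (16:ℝ) * 16 ^ (n - 1) = 16 ^ n := by
      rw [← pow_succ']
      congr 1; omega
    have hexp : Real.exp (((n : ℝ) - 1) * (15 * (s * r / 4)))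
        ≤ Real.exp (4 * ((n : ℝ) - 1) * s * r) := by
      apply Real.exp_le_exp.2
      nlinarith [hsr0]
    calc 16 * ∫ u in (0:ℝ)..(r / 4), Real.sinh (s * (16 * u)) ^ (n - 1)
        ≤ 16 * (16 ^ (n - 1) * Real.exp (((n : ℝ) - 1) * (15 * (s * r / 4))) * I) := by
          apply mul_le_mul_of_nonneg_left hmono (by norm_num)
      _ = (16 * 16 ^ (n - 1)) * Real.exp (((n : ℝ) - 1) * (15 * (s * r / 4))) * I := by ring
      _ ≤ 16 ^ n * Real.exp (4 * ((n : ℝ) - 1) * s * r) * I := by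
          rw [h16n]
          exact mul_le_mul_of_nonneg_right
            (mul_le_mul_of_nonneg_left hexp (by positivity)) hI
      _ = 2 ^ (4 * n) * Real.exp (4 * ((n : ℝ) - 1) * s * r) * I := by rw [h2]
  refine ⟨key, key.trans ?_⟩
  apply mul_le_mul_of_nonneg_right _ hI
  apply mul_le_mul_of_nonneg_left _ (by positivity)
  apply Real.exp_le_exp.2
  nlinarith [hn1]
end

section
/- Let G = ℤ/2 × ℤ/2 be the Klein four-group with nonidentity elements σ, τ, στ. Let H₁ = ⟨σ⟩, H₂ = ⟨τ⟩, H₃ = ⟨στ⟩ and K₁ = {1}, K₂ = G, K₃ = G. Then for every x ∈ G, Σ_{i=1}^{3} |[x] ∩ Hᵢ|/|Hᵢ| = Σ_{i=1}^{3} |[x] ∩ Kᵢ|/|Kᵢ|, where [x] is the conjugacy class of x in G (so [x] = {x} since G is abelian). -/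
open scoped Classical in
lemma card_conj_inter {G : Type*} [CommGroup G] (x : G) (H : Subgroup G) :
    Nat.card {y : G // IsConj x y ∧ y ∈ H} = if x ∈ H then 1 else 0 := by
  split_ifs with h
  · haveI : Unique {y : G // IsConj x y ∧ y ∈ H} :=
      ⟨⟨⟨x, IsConj.refl x, h⟩⟩, by
        rintro ⟨y, hc, hy⟩
        ext
        exact (isConj_iff_eq.mp hc).symm⟩
    exact Nat.card_unique
  · haveI : IsEmpty {y : G // IsConj x y ∧ y ∈ H} :=
      ⟨by rintro ⟨y, hc, hy⟩; exact h ((isConj_iff_eq.mp hc) ▸ hy)⟩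
    exact Nat.card_of_isEmpty

lemma mem_zpowers_of_sq_eq_one {G : Type*} [Group G] {a : G} (h : a ^ (2:ℕ) = 1) (b : G) :
    b ∈ Subgroup.zpowers a ↔ b = 1 ∨ b = a := by
  constructor
  · rintro ⟨n, rfl⟩
    rcases Int.even_or_odd n with ⟨k, hk⟩ | ⟨k, hk⟩
    · left
      subst hk
      show a ^ (k + k) = 1
      rw [← two_mul, zpow_mul, show (2:ℤ) = ((2:ℕ):ℤ) from rfl, zpow_natCast, h, one_zpow]
    · right
      subst hk
      show a ^ (2 * k + 1) = a
      rw [zpow_add, zpow_mul, show (2:ℤ) = ((2:ℕ):ℤ) from rfl, zpow_natCast, h, one_zpow,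
        one_mul, zpow_one]
  · rintro (rfl | rfl)
    · exact one_mem _
    · exact Subgroup.mem_zpowers _

/-- The Sunada-type condition for the Klein four-group `G` with the collections
`H₁ = ⟨σ⟩, H₂ = ⟨τ⟩, H₃ = ⟨στ⟩` and `K₁ = {1}, K₂ = G, K₃ = G`:
for every `x ∈ G`, `Σᵢ |[x]∩Hᵢ|/|Hᵢ| = Σᵢ |[x]∩Kᵢ|/|Kᵢ|`. -/
theorem klein_four_sunada_condition
    (σ τ : Multiplicative (ZMod 2 × ZMod 2))
    (hσ : σ = Multiplicative.ofAdd (1, 0))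
    (hτ : τ = Multiplicative.ofAdd (0, 1))
    (H₁ H₂ H₃ K₁ K₂ K₃ : Subgroup (Multiplicative (ZMod 2 × ZMod 2)))
    (hH₁ : H₁ = Subgroup.zpowers σ) (hH₂ : H₂ = Subgroup.zpowers τ)
    (hH₃ : H₃ = Subgroup.zpowers (σ * τ))
    (hK₁ : K₁ = ⊥) (hK₂ : K₂ = ⊤) (hK₃ : K₃ = ⊤) :
    ∀ x : Multiplicative (ZMod 2 × ZMod 2),
      (Nat.card {y : Multiplicative (ZMod 2 × ZMod 2) // IsConj x y ∧ y ∈ H₁} : ℚ)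
          / (Nat.card H₁ : ℚ)
        + (Nat.card {y : Multiplicative (ZMod 2 × ZMod 2) // IsConj x y ∧ y ∈ H₂} : ℚ)
          / (Nat.card H₂ : ℚ)
        + (Nat.card {y : Multiplicative (ZMod 2 × ZMod 2) // IsConj x y ∧ y ∈ H₃} : ℚ)
          / (Nat.card H₃ : ℚ)
      = (Nat.card {y : Multiplicative (ZMod 2 × ZMod 2) // IsConj x y ∧ y ∈ K₁} : ℚ)
          / (Nat.card K₁ : ℚ)
        + (Nat.card {y : Multiplicative (ZMod 2 × ZMod 2) // IsConj x y ∧ y ∈ K₂} : ℚ)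
          / (Nat.card K₂ : ℚ)
        + (Nat.card {y : Multiplicative (ZMod 2 × ZMod 2) // IsConj x y ∧ y ∈ K₃} : ℚ)
          / (Nat.card K₃ : ℚ) := by
  subst hσ hτ hH₁ hH₂ hH₃ hK₁ hK₂ hK₃
  have hs1 : (Multiplicative.ofAdd ((1:ZMod 2), (0:ZMod 2))) ^ (2:ℕ) = 1 := by decide
  have hs2 : (Multiplicative.ofAdd ((0:ZMod 2), (1:ZMod 2))) ^ (2:ℕ) = 1 := by decide
  have hs3 : (Multiplicative.ofAdd ((1:ZMod 2), (0:ZMod 2)) *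
      Multiplicative.ofAdd ((0:ZMod 2), (1:ZMod 2))) ^ (2:ℕ) = 1 := by decide
  have o1 : orderOf (Multiplicative.ofAdd ((1:ZMod 2), (0:ZMod 2))) = 2 :=
    orderOf_eq_prime hs1 (by decide)
  have o2 : orderOf (Multiplicative.ofAdd ((0:ZMod 2), (1:ZMod 2))) = 2 :=
    orderOf_eq_prime hs2 (by decide)
  have o3 : orderOf (Multiplicative.ofAdd ((1:ZMod 2), (0:ZMod 2)) *
      Multiplicative.ofAdd ((0:ZMod 2), (1:ZMod 2))) = 2 :=
    orderOf_eq_prime hs3 (by decide)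
  have ctop : Nat.card (⊤ : Subgroup (Multiplicative (ZMod 2 × ZMod 2))) = 4 := by
    rw [Subgroup.card_top, Nat.card_eq_fintype_card]
    rfl
  intro x
  simp only [card_conj_inter]
  rw [Nat.card_zpowers, Nat.card_zpowers, Nat.card_zpowers, o1, o2, o3,
    Subgroup.card_bot, ctop]
  simp only [mem_zpowers_of_sq_eq_one hs1, mem_zpowers_of_sq_eq_one hs2,
    mem_zpowers_of_sq_eq_one hs3, Subgroup.mem_bot, Subgroup.mem_top, if_true]
  have hx : x = 1 ∨ x = Multiplicative.ofAdd ((1:ZMod 2), (0:ZMod 2)) ∨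
      x = Multiplicative.ofAdd ((0:ZMod 2), (1:ZMod 2)) ∨
      x = Multiplicative.ofAdd ((1:ZMod 2), (0:ZMod 2)) *
        Multiplicative.ofAdd ((0:ZMod 2), (1:ZMod 2)) := by
    revert x
    decide
  rcases hx with rfl | rfl | rfl | rfl
  · rw [if_pos (by decide), if_pos (by decide), if_pos (by decide), if_pos (by decide)]
    norm_num
  · rw [if_pos (by decide), if_neg (by decide), if_neg (by decide), if_neg (by decide)]
    norm_num
  · rw [if_neg (by decide), if_pos (by decide), if_neg (by decide), if_neg (by decide)]
    norm_num
  · rw [if_neg (by decide), if_neg (by decide), if_pos (by decide), if_neg (by decide)]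
    norm_num
end

section
/- Let L and L̄ be finite multisets of positive reals, not both empty, and let σ₁ ≤ σ₂ ≤ σ₃ ≤ ⋯ be the nondecreasing enumeration of the multiset σ(L;L̄) = (⊎_{ℓ∈L} A(ℓ)) ⊎ (⊎_{ℓ̄∈L̄} Ā(2ℓ̄)), where A(ℓ) = {0} ∪ (2π/ℓ)ℕ⁺ ∪ (2π/ℓ)ℕ⁺ and Ā(ℓ) = {0} ∪ (2π/ℓ)ℕ⁺. Let ℓ* be the largest element of the multiset L ⊎ 2L̄. Then limsup_{j→∞} (σ_{j+1} − σ_j) = 2π/ℓ*. -/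
open Filter Real

/-! Every progression `(2π/ℓ)ℕ⁺`, `ℓ ∈ L ⊎ 2L̄`, has step at least `d = 2π/ℓ*`, and the
progression of step `d` itself occurs, so every gap is at most `d`. Conversely, since
`n ↦ n • (d mod t)_t` recurs near `0` in the compact torus `∏_t ℝ/tℤ` (simultaneous Dirichlet
approximation), there are arbitrarily large `x = n d` within `ε/2` of a point of every
progression. No spectral value then lies in `(x + ε/2, x + d - ε/2)`, so the gap straddling
`x + ε/2` is at least `d - ε`. -/

theorem exists_nsmul_norm_lt {G : Type*} [SeminormedAddCommGroup G] [CompactSpace G] (g : G)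
    {ε : ℝ} (hε : 0 < ε) (N : ℕ) : ∃ n, N < n ∧ ‖n • g‖ < ε := by
  -- two far-apart terms of a convergent subsequence are close, and `‖b • g - a • g‖ = ‖(b - a) • g‖`
  obtain ⟨a, -, φ, hφ, hlim⟩ :=
    isCompact_univ.tendsto_subseq (x := fun n : ℕ => n • g) fun _ => trivial
  obtain ⟨K, hK⟩ := Metric.cauchySeq_iff'.1 hlim.cauchySeq ε hε
  have hk := hφ.id_le (K + φ K + N + 1)
  refine ⟨φ (K + φ K + N + 1) - φ K, by simp only [id] at hk; omega, ?_⟩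
  rw [sub_nsmul _ (hφ.monotone (by omega)), ← sub_eq_add_neg, ← dist_eq_norm]
  exact hK _ (by omega)

theorem exists_nat_forall_abs_mul_sub_int_mul_lt {ι : Type*} [Fintype ι] (t : ι → ℝ)
    (ht : ∀ i, 0 < t i) (x : ℝ) {ε : ℝ} (hε : 0 < ε) (N : ℕ) :
    ∃ n : ℕ, N < n ∧ ∀ i, ∃ m : ℤ, |n * x - m * t i| < ε := by
  have : ∀ i, Fact (0 < t i) := fun i => ⟨ht i⟩
  obtain ⟨n, hn, hnorm⟩ := exists_nsmul_norm_lt (fun i => (x : AddCircle (t i))) hε N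
  refine ⟨n, hn, fun i => ⟨round ((t i)⁻¹ * (n * x)), ?_⟩⟩
  have := (pi_norm_lt_iff hε).1 hnorm i
  rwa [Pi.smul_apply, ← AddCircle.coe_nsmul, AddCircle.norm_eq, nsmul_eq_mul] at this

theorem intCast_mul_notMem_Ioo {t d x η : ℝ} (ht : 0 ≤ t) (hdt : d ≤ t) {m : ℤ}
    (hm : |x - m * t| < η) (k : ℤ) : (k * t : ℝ) ∉ Set.Ioo (x + η) (x + d - η) := by
  rintro ⟨hlo, hhi⟩
  rw [abs_lt] at hm
  rcases le_or_gt k m with hkm | hmk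
  · have : (k * t : ℝ) ≤ m * t := mul_le_mul_of_nonneg_right (by exact_mod_cast hkm) ht
    linarith
  · have : ((m + 1) * t : ℝ) ≤ k * t :=
      mul_le_mul_of_nonneg_right (by exact_mod_cast Int.add_one_le_iff.2 hmk) ht
    linarith

theorem Monotone.exists_le_lt_succ {α : Type*} [LinearOrder α] {u : ℕ → α} (hu : Monotone u)
    {a : ℕ} {c : α} (ha : u a ≤ c) (hc : ∃ b, c < u b) :
    ∃ j, a ≤ j ∧ u j ≤ c ∧ c < u (j + 1) := by
  classical
  have hfind : a < Nat.find hc := hu.reflect_lt (ha.trans_lt (Nat.find_spec hc))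
  obtain ⟨j, hj⟩ : ∃ j, Nat.find hc = j + 1 := Nat.exists_eq_succ_of_ne_zero (by omega)
  exact ⟨j, by omega, not_lt.1 (Nat.find_min hc (by omega)), hj ▸ Nat.find_spec hc⟩

theorem Filter.limsup_eq_of_eventually_le_of_frequently {α : Type*} {f : Filter α} {u : α → ℝ}
    {a : ℝ} (hle : ∀ᶠ x in f, u x ≤ a) (hfreq : ∀ ε > 0, ∃ᶠ x in f, a - ε ≤ u x) :
    limsup u f = a := by
  have hcob : IsCoboundedUnder (· ≤ ·) f u := ⟨a - 1, fun b hb =>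
    let ⟨_, hx⟩ := ((hfreq 1 one_pos).and_eventually hb).exists; hx.1.trans hx.2⟩
  exact le_antisymm (limsup_le_of_le hcob hle) (le_of_forall_sub_le fun ε hε =>
    le_limsup_of_frequently_le (hfreq ε hε) (isBoundedUnder_of_eventually_le hle))

theorem Filter.Tendsto.finite_setOf_eq {β : Type*} [Preorder β] [NoTopOrder β] {u : ℕ → β}
    (hu : Tendsto u atTop atTop) (b : β) : {i | u i = b}.Finite := by
  simpa [← Nat.cofinite_eq_atTop] using hu.eventually_ne_atTop b

section Progressions

variable {T : Finset ℝ} {d : ℝ} {σ : ℕ → ℝ}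

theorem tendsto_atTop_of_forall_nat_mul (hmono : Monotone σ) (hd : 0 < d)
    (hmult : ∀ m : ℕ, 0 < m → ∃ j, σ j = m * d) : Tendsto σ atTop atTop := by
  refine tendsto_atTop_atTop_of_monotone hmono fun b => ?_
  obtain ⟨m, hm⟩ := exists_nat_gt (b / d)
  obtain ⟨j, hj⟩ := hmult (m + 1) m.succ_pos
  refine ⟨j, ?_⟩
  rw [hj, Nat.cast_succ]
  nlinarith [(div_lt_iff₀ hd).1 hm]

theorem gap_le_of_forall_nat_mul (hmono : Monotone σ) (hd : 0 < d)
    (hmult : ∀ m : ℕ, 0 < m → ∃ j, σ j = m * d) (hnonneg : ∀ j, 0 ≤ σ j) (j : ℕ) :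
    σ (j + 1) - σ j ≤ d := by
  set n := ⌊σ j / d⌋₊
  obtain ⟨j', hj'⟩ := hmult (n + 1) n.succ_pos
  rw [Nat.cast_succ] at hj'
  have hlt : σ j < (n + 1) * d := (div_lt_iff₀ hd).1 (Nat.lt_floor_add_one _)
  have hle : n * d ≤ σ j := (le_div_iff₀ hd).1 (Nat.floor_le (div_nonneg (hnonneg j) hd.le))
  have hjj' : j + 1 ≤ j' := hmono.reflect_lt (hj' ▸ hlt)
  linarith [hmono hjj']

theorem frequently_sub_le_gap (hmono : Monotone σ) (hd : 0 < d) (hmin : ∀ t ∈ T, d ≤ t)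
    (hmult : ∀ m : ℕ, 0 < m → ∃ j, σ j = m * d) (hval : ∀ j, ∃ t ∈ T, ∃ k : ℕ, σ j = k * t)
    {ε : ℝ} (hε : 0 < ε) : ∃ᶠ j in atTop, d - ε ≤ σ (j + 1) - σ j := by
  rw [frequently_atTop]
  intro N
  have ht : ∀ t : T, 0 < (t : ℝ) := fun t => hd.trans_le (hmin t t.2)
  obtain ⟨n, hn, happrox⟩ :=
    exists_nat_forall_abs_mul_sub_int_mul_lt (fun t : T => (t : ℝ)) ht d (half_pos hε) ⌈σ N / d⌉₊
  have hN : σ N ≤ n * d + ε / 2 := by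
    linarith [(div_lt_iff₀ hd).1 (Nat.lt_of_ceil_lt hn)]
  obtain ⟨j, hNj, hj, hj1⟩ := hmono.exists_le_lt_succ hN
    ((tendsto_atTop_of_forall_nat_mul hmono hd hmult).eventually_gt_atTop _).exists
  refine ⟨j, hNj, ?_⟩
  obtain ⟨t, hT, k, hk⟩ := hval (j + 1)
  obtain ⟨m, hm⟩ := happrox ⟨t, hT⟩
  have := intCast_mul_notMem_Ioo (ht ⟨t, hT⟩).le (hmin t hT) hm k
  rw [Int.cast_natCast, ← hk, Set.mem_Ioo, not_and, not_lt] at this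
  linarith [this hj1]

theorem limsup_gap_eq (hmono : Monotone σ) (hd : 0 < d) (hmin : ∀ t ∈ T, d ≤ t)
    (hmult : ∀ m : ℕ, 0 < m → ∃ j, σ j = m * d) (hval : ∀ j, ∃ t ∈ T, ∃ k : ℕ, σ j = k * t) :
    limsup (fun j => σ (j + 1) - σ j) atTop = d := by
  have hnonneg : ∀ j, 0 ≤ σ j := fun j => by
    obtain ⟨t, hT, k, hk⟩ := hval j
    exact hk ▸ mul_nonneg k.cast_nonneg (hd.le.trans (hmin t hT))
  exact limsup_eq_of_eventually_le_of_frequently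
    (.of_forall (gap_le_of_forall_nat_mul hmono hd hmult hnonneg))
    fun ε hε => frequently_sub_le_gap hmono hd hmin hmult hval hε

end Progressions

theorem exists_nat_eq_mul_div_iff {r ℓ : ℝ} :
    (∃ m : ℕ, r = 2 * π * m / ℓ) ↔ r = 0 ∨ ∃ m : ℕ, 0 < m ∧ r = 2 * π * m / ℓ := by
  constructor
  · rintro ⟨m, rfl⟩
    rcases m.eq_zero_or_pos with rfl | hm
    · simp
    · exact Or.inr ⟨m, hm, rfl⟩
  · rintro (rfl | ⟨m, -, rfl⟩)
    · exact ⟨0, by simp⟩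
    · exact ⟨m, rfl⟩

theorem Amult_eq_zero_iff {ℓ r : ℝ} : Amult ℓ r = 0 ↔ ¬ ∃ m : ℕ, r = 2 * π * m / ℓ := by
  rw [exists_nat_eq_mul_div_iff, Amult]
  split_ifs <;> simp_all

theorem Abarmult_eq_zero_iff {ℓ r : ℝ} : Abarmult ℓ r = 0 ↔ ¬ ∃ m : ℕ, r = 2 * π * m / ℓ := by
  rw [exists_nat_eq_mul_div_iff, Abarmult]
  split_ifs <;> simp_all

theorem sigmaMult_ne_zero_iff {L Lb : Multiset ℝ} {r : ℝ} :
    sigmaMult L Lb r ≠ 0 ↔ ∃ ℓ ∈ L + Lb.map (fun ℓ => 2 * ℓ), ∃ m : ℕ, r = 2 * π * m / ℓ := by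
  simp only [sigmaMult, ne_eq, Nat.add_eq_zero_iff, Multiset.sum_eq_zero_iff, Multiset.mem_map,
    forall_exists_index, and_imp, forall_apply_eq_imp_iff₂, Amult_eq_zero_iff,
    Abarmult_eq_zero_iff, Multiset.mem_add, not_and_or, not_forall, not_not, exists_prop,
    or_and_right, exists_or, exists_exists_and_eq_and]

theorem gap_limsup_general (L Lb : Multiset ℝ)
    (hL : ∀ ℓ ∈ L, 0 < ℓ) (hLb : ∀ ℓ ∈ Lb, 0 < ℓ)
    (ℓstar : ℝ)
    (hmem : ℓstar ∈ L + Lb.map (fun ℓ => 2 * ℓ))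
    (hmax : ∀ x ∈ L + Lb.map (fun ℓ => 2 * ℓ), x ≤ ℓstar)
    (σ : ℕ → ℝ) (hmono : Monotone σ)
    (henum : ∀ r : ℝ, Nat.card {j : ℕ | σ j = r} = sigmaMult L Lb r) :
    Filter.limsup (fun j => σ (j + 1) - σ j) Filter.atTop = 2 * Real.pi / ℓstar := by
  set M := L + Lb.map (fun ℓ => 2 * ℓ)
  have hpos : ∀ ℓ ∈ M, 0 < ℓ := by
    simp only [M, Multiset.mem_add, Multiset.mem_map]
    rintro _ (hℓ | ⟨ℓ, hℓ, rfl⟩)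
    exacts [hL _ hℓ, mul_pos two_pos (hLb ℓ hℓ)]
  have hd : 0 < 2 * π / ℓstar := div_pos two_pi_pos (hpos _ hmem)
  have hmin : ∀ t ∈ M.toFinset.image (2 * π / ·), 2 * π / ℓstar ≤ t := by
    simp only [Finset.forall_mem_image, Multiset.mem_toFinset]
    exact fun ℓ hℓ => div_le_div_of_nonneg_left two_pi_pos.le (hpos ℓ hℓ) (hmax ℓ hℓ)
  have hmult : ∀ m : ℕ, 0 < m → ∃ j, σ j = m * (2 * π / ℓstar) := fun m _ => by
    have := sigmaMult_ne_zero_iff (r := m * (2 * π / ℓstar)) |>.2 ⟨ℓstar, hmem, m, by ring⟩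
    obtain ⟨⟨j, hj⟩, -⟩ := Nat.card_ne_zero.1 (henum _ ▸ this)
    exact ⟨j, hj⟩
  have htop := tendsto_atTop_of_forall_nat_mul hmono hd hmult
  refine limsup_gap_eq hmono hd hmin hmult fun j => ?_
  have hcard : Nat.card {i | σ i = σ j} ≠ 0 :=
    Nat.card_ne_zero.2 ⟨⟨⟨j, rfl⟩⟩, (htop.finite_setOf_eq (σ j)).to_subtype⟩
  obtain ⟨ℓ, hℓ, k, hk⟩ := sigmaMult_ne_zero_iff.1 (henum (σ j) ▸ hcard)
  exact ⟨2 * π / ℓ, Finset.mem_image_of_mem _ (Multiset.mem_toFinset.2 hℓ), k, by rw [hk]; ring⟩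

/-- For the nondecreasing enumeration `σ` of the canonical spectrum `σ(L;L̄)`,
the limsup of consecutive gaps equals `2π/ℓ*` where `ℓ*` is the largest
element of `L ⊎ 2L̄`. -/
theorem gap_limsup (L Lb : Multiset ℝ)
    (hL : ∀ ℓ ∈ L, 0 < ℓ) (hLb : ∀ ℓ ∈ Lb, 0 < ℓ)
    (hne : L + Lb ≠ 0)
    (ℓstar : ℝ)
    (hmem : ℓstar ∈ L + Lb.map (fun ℓ => 2 * ℓ))
    (hmax : ∀ x ∈ L + Lb.map (fun ℓ => 2 * ℓ), x ≤ ℓstar)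
    (σ : ℕ → ℝ) (hmono : Monotone σ)
    (henum : ∀ r : ℝ, Nat.card {j : ℕ | σ j = r} = sigmaMult L Lb r) :
    Filter.limsup (fun j => σ (j + 1) - σ j) Filter.atTop = 2 * Real.pi / ℓstar :=
  gap_limsup_general L Lb hL hLb ℓstar hmem hmax σ hmono henum
end
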